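/- arXiv:0706.0478 — 6 statements merged into one kernel-verified Lean document; each statement's English description precedes it below -/
import Mathlib

section
/- Let U be a utility function with convex conjugate V, and assume U(0) > 0. Then the following two growth conditions on V are equivalent: (i) for every λ > 0 there exists C > 0 such that V(λ y) ≤ C·V(y) for all y ≥ 0; (ii) there exists C' > 0 such that y·|V'(y)| ≤ C'·V(y) for all y > 0. -/
open Set Filter

/-- For a utility function `U` (strictly increasing, strictly concave, continuously
differentiable, Inada conditions) with `U 0 > 0` and convex conjugate
`V y = sup_x (U x - x * y)` (with `V 0 = sup_x U x`), the following growth conditions are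
equivalent:
(i) for every `λ > 0` there is `C > 0` with `V (λ y) ≤ C * V y` for all `y ≥ 0`;
(ii) there is `C' > 0` with `y * |V' y| ≤ C' * V y` for all `y > 0`. -/
theorem growth_conditions_equivalent
    (U : ℝ → ℝ) (hUmono : StrictMono U) (hUconc : StrictConcaveOn ℝ Set.univ U)
    (hUdiff : Differentiable ℝ U) (hUderiv : Continuous (deriv U))
    (hInada_bot : Tendsto (deriv U) atBot atTop)
    (hInada_top : Tendsto (deriv U) atTop (nhds 0))
    (hU0 : 0 < U 0)
    (V : ℝ → ℝ) (hV : ∀ y ∈ Ioi (0 : ℝ), IsLUB {z : ℝ | ∃ x : ℝ, z = U x - x * y} (V y))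
    (hV0 : V 0 = sSup (Set.range U)) :
    (∀ lam : ℝ, 0 < lam → ∃ C : ℝ, 0 < C ∧ ∀ y : ℝ, 0 ≤ y → V (lam * y) ≤ C * V y) ↔
      (∃ C' : ℝ, 0 < C' ∧ ∀ y : ℝ, 0 < y → y * |deriv V y| ≤ C' * V y) := by
  -- V is an upper bound of the defining set
  have hub : ∀ y : ℝ, 0 < y → ∀ x : ℝ, U x - x * y ≤ V y := fun y hy x =>
    (hV y hy).1 ⟨x, rfl⟩
  have hVpos : ∀ y : ℝ, 0 < y → 0 < V y := by
    intro y hy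
    have h := hub y hy 0
    simp only [zero_mul, sub_zero] at h
    linarith
  -- deriv U is strictly antitone and positive
  have hanti : StrictAnti (deriv U) := by
    intro a b hab
    exact hUconc.strictAntiOn_deriv (fun x _ => hUdiff x) (mem_univ a) (mem_univ b) hab
  have hpos : ∀ x, 0 < deriv U x := by
    intro x
    have h1 : ∀ᶠ z in atTop, deriv U z ≤ deriv U (x + 1) := by
      filter_upwards [eventually_ge_atTop (x + 1)] with z hz
      exact hanti.antitone hz
    have h0 : (0 : ℝ) ≤ deriv U (x + 1) := le_of_tendsto hInada_top h1
    exact lt_of_le_of_lt h0 (hanti (lt_add_one x))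
  -- surjectivity of deriv U onto (0, ∞)
  have hsurj : ∀ y : ℝ, ∃ x, 0 < y → deriv U x = y := by
    intro y
    by_cases hy : 0 < y
    · obtain ⟨a, ha⟩ := (hInada_bot.eventually (eventually_ge_atTop y)).exists
      obtain ⟨b, hb⟩ := (hInada_top.eventually (gt_mem_nhds hy)).exists
      have hab : a < b := by
        by_contra h
        push_neg at h
        have := hanti.antitone h
        linarith
      have hmem : y ∈ Icc (deriv U b) (deriv U a) := ⟨hb.le, ha⟩
      obtain ⟨x, _, hx⟩ := intermediate_value_Icc' hab.le (hUderiv.continuousOn) hmem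
      exact ⟨x, fun _ => hx⟩
    · exact ⟨0, fun h => absurd h hy⟩
  choose I hI using hsurj
  -- tangent line inequality for concave U
  have htan : ∀ x x₀ : ℝ, U x - x * deriv U x₀ ≤ U x₀ - x₀ * deriv U x₀ := by
    intro x x₀
    have hcv : ConcaveOn ℝ univ U := hUconc.concaveOn
    rcases lt_trichotomy x x₀ with h | h | h
    · have hs := hcv.le_slope_of_hasDerivAt (mem_univ x) (mem_univ x₀) h (hUdiff x₀).hasDerivAt
      rw [slope_def_field] at hs
      have h' := (le_div_iff₀ (by linarith : (0:ℝ) < x₀ - x)).mp hs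
      nlinarith
    · rw [h]
    · have hs := hcv.slope_le_of_hasDerivAt (mem_univ x₀) (mem_univ x) h (hUdiff x₀).hasDerivAt
      rw [slope_def_field] at hs
      have h' := (div_le_iff₀ (by linarith : (0:ℝ) < x - x₀)).mp hs
      nlinarith
  -- the supremum is attained at I y
  have hatt : ∀ y : ℝ, 0 < y → V y = U (I y) - I y * y := by
    intro y hy
    have hmem : (U (I y) - I y * y) ∈ {z : ℝ | ∃ x, z = U x - x * y} := ⟨I y, rfl⟩
    have hisl : IsLUB {z : ℝ | ∃ x, z = U x - x * y} (U (I y) - I y * y) := by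
      constructor
      · rintro z ⟨x, rfl⟩
        have h := htan x (I y)
        rw [hI y hy] at h
        exact h
      · intro b hb
        exact hb hmem
    exact (hV y hy).unique hisl
  -- subgradient inequality
  have hsub : ∀ y, 0 < y → ∀ z, 0 < z → V y - I y * (z - y) ≤ V z := by
    intro y hy z hz
    have h1 := hub z hz (I y)
    have h2 : V y - I y * (z - y) = U (I y) - I y * z := by rw [hatt y hy]; ring
    rw [h2]
    exact h1
  -- continuity estimate for I
  have hIcont : ∀ y, 0 < y → ∀ ε, 0 < ε → ∀ᶠ z in nhds y, 0 < z ∧ |I z - I y| < ε := by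
    intro y hy ε hε
    have hc : deriv U (I y + ε) < y := by
      have h := hanti (show I y < I y + ε by linarith)
      rwa [hI y hy] at h
    have hd : y < deriv U (I y - ε) := by
      have h := hanti (show I y - ε < I y by linarith)
      rwa [hI y hy] at h
    have hcpos : 0 < deriv U (I y + ε) := hpos _
    filter_upwards [Ioo_mem_nhds hc hd] with z hz
    have hz0 : 0 < z := lt_trans hcpos hz.1
    refine ⟨hz0, ?_⟩
    have h1 : I z < I y + ε := by
      by_contra h
      push_neg at h
      have h2 := hanti.antitone h
      rw [hI z hz0] at h2
      exact absurd hz.1 (not_lt.mpr h2)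
    have h2 : I y - ε < I z := by
      by_contra h
      push_neg at h
      have h3 := hanti.antitone h
      rw [hI z hz0] at h3
      exact absurd hz.2 (not_lt.mpr h3)
    rw [abs_lt]
    constructor <;> linarith
  -- V is differentiable with derivative -(I y)
  have hVderiv : ∀ y, 0 < y → HasDerivAt V (-(I y)) y := by
    intro y hy
    rw [hasDerivAt_iff_isLittleO, Asymptotics.isLittleO_iff]
    intro c hc
    filter_upwards [hIcont y hy c hc] with z hz
    obtain ⟨hz0, hzc⟩ := hz
    have hl : V y - I y * (z - y) ≤ V z := hsub y hy z hz0
    have hr : V z - I z * (y - z) ≤ V y := hsub z hz0 y hy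
    have key : 0 ≤ V z - V y + I y * (z - y) := by linarith
    have key2 : V z - V y + I y * (z - y) ≤ (I y - I z) * (z - y) := by nlinarith
    have key3 : (I y - I z) * (z - y) ≤ c * |z - y| := by
      calc (I y - I z) * (z - y) ≤ |(I y - I z) * (z - y)| := le_abs_self _
        _ = |I y - I z| * |z - y| := abs_mul _ _
        _ ≤ c * |z - y| := by
            apply mul_le_mul_of_nonneg_right _ (abs_nonneg _)
            rw [abs_sub_comm]
            exact hzc.le
    rw [Real.norm_eq_abs, Real.norm_eq_abs, smul_eq_mul]
    rw [abs_of_nonneg (by nlinarith : (0:ℝ) ≤ V z - V y - (z - y) * -(I y))]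
    nlinarith
  have hIcontAt : ∀ y, 0 < y → ContinuousAt I y := by
    intro y hy
    have : Tendsto I (nhds y) (nhds (I y)) := by
      rw [Metric.tendsto_nhds]
      intro ε hε
      filter_upwards [hIcont y hy ε hε] with z hz
      rw [Real.dist_eq]
      exact hz.2
    exact this
  constructor
  · -- (i) → (ii)
    intro h1
    obtain ⟨C₁, hC₁, hC₁le⟩ := h1 2 (by norm_num)
    obtain ⟨C₂, hC₂, hC₂le⟩ := h1 (1/2) (by norm_num)
    refine ⟨max C₁ (2 * C₂), lt_max_of_lt_left hC₁, ?_⟩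
    intro y hy
    have hd : deriv V y = -(I y) := (hVderiv y hy).deriv
    rw [hd]
    have hVy := hVpos y hy
    have e1 : -(y * I y) ≤ C₁ * V y := by
      have h2y := hsub y hy (2 * y) (by linarith)
      have hle := hC₁le y hy.le
      nlinarith
    have e2 : y * I y ≤ 2 * C₂ * V y := by
      have hhalf := hsub y hy (y / 2) (by linarith)
      have hle := hC₂le y hy.le
      have heq : (1:ℝ) / 2 * y = y / 2 := by ring
      rw [heq] at hle
      nlinarith
    have m1 : C₁ * V y ≤ max C₁ (2 * C₂) * V y :=
      mul_le_mul_of_nonneg_right (le_max_left _ _) hVy.le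
    have m2 : 2 * C₂ * V y ≤ max C₁ (2 * C₂) * V y :=
      mul_le_mul_of_nonneg_right (le_max_right _ _) hVy.le
    have habs : y * |(-(I y))| = |y * I y| := by
      rw [abs_neg, abs_mul, abs_of_pos hy]
    rw [habs]
    rw [abs_le]
    constructor <;> linarith
  · -- (ii) → (i)
    intro h2
    obtain ⟨C', hC', hC'le⟩ := h2
    intro lam hlam
    refine ⟨Real.exp (C' * |Real.log lam|), Real.exp_pos _, ?_⟩
    have hV0nonneg : 0 ≤ V 0 := by
      rw [hV0]
      by_cases hb : BddAbove (Set.range U)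
      · exact le_trans hU0.le (le_csSup hb ⟨0, rfl⟩)
      · rw [Real.sSup_of_not_bddAbove hb]
    intro y hy0
    rcases eq_or_lt_of_le hy0 with rfl | hy
    · rw [mul_zero]
      have h1 : (1:ℝ) ≤ Real.exp (C' * |Real.log lam|) :=
        Real.one_le_exp (by positivity)
      nlinarith
    · -- y > 0
      have key : ∀ a b : ℝ, 0 < a → a ≤ b →
          Real.log (V b) - Real.log (V a) ≤ C' * (Real.log b - Real.log a) ∧
          Real.log (V a) - Real.log (V b) ≤ C' * (Real.log b - Real.log a) := by
        intro a b ha hab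
        have hb : 0 < b := lt_of_lt_of_le ha hab
        have hIcc : ∀ t ∈ Icc a b, 0 < t := fun t ht => lt_of_lt_of_le ha ht.1
        have hg : ∀ t ∈ uIcc a b, HasDerivAt (fun z => Real.log (V z)) (-(I t) / V t) t := by
          intro t ht
          rw [uIcc_of_le hab] at ht
          have ht0 := hIcc t ht
          exact (hVderiv t ht0).log (ne_of_gt (hVpos t ht0))
        have hcont : ContinuousOn (fun t => -(I t) / V t) (uIcc a b) := by
          rw [uIcc_of_le hab]
          intro t ht
          have ht0 := hIcc t ht
          exact (((hIcontAt t ht0).neg).div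
            (hVderiv t ht0).differentiableAt.continuousAt
            (ne_of_gt (hVpos t ht0))).continuousWithinAt
        have hint : IntervalIntegrable (fun t => -(I t) / V t) MeasureTheory.volume a b :=
          hcont.intervalIntegrable
        have heq : (∫ t in a..b, -(I t) / V t) = Real.log (V b) - Real.log (V a) :=
          intervalIntegral.integral_eq_sub_of_hasDerivAt hg hint
        have hcontC : ContinuousOn (fun t : ℝ => C' / t) (uIcc a b) := by
          rw [uIcc_of_le hab]
          intro t ht
          exact (continuousAt_const.div continuousAt_id
            (ne_of_gt (hIcc t ht))).continuousWithinAt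
        have hintC : IntervalIntegrable (fun t : ℝ => C' / t) MeasureTheory.volume a b :=
          hcontC.intervalIntegrable
        have hptup : ∀ t ∈ Icc a b, -(I t) / V t ≤ C' / t := by
          intro t ht
          have ht0 := hIcc t ht
          have h := hC'le t ht0
          have hd : deriv V t = -(I t) := (hVderiv t ht0).deriv
          rw [hd, abs_neg] at h
          have h1 : -(I t) ≤ |I t| := neg_le_abs _
          have h2 : |I t| / V t ≤ C' / t := by
            rw [div_le_div_iff₀ (hVpos t ht0) ht0]
            nlinarith
          exact le_trans ((div_le_div_iff_of_pos_right (hVpos t ht0)).mpr h1) h2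
        have hptlow : ∀ t ∈ Icc a b, -(C' / t) ≤ -(I t) / V t := by
          intro t ht
          have ht0 := hIcc t ht
          have h := hC'le t ht0
          have hd : deriv V t = -(I t) := (hVderiv t ht0).deriv
          rw [hd, abs_neg] at h
          have h1 : -|I t| ≤ -(I t) := neg_le_neg (le_abs_self _)
          have h2 : -(C' / t) ≤ -|I t| / V t := by
            rw [neg_div, neg_le_neg_iff, div_le_div_iff₀ (hVpos t ht0) ht0]
            nlinarith
          exact le_trans h2 ((div_le_div_iff_of_pos_right (hVpos t ht0)).mpr h1)
        have hmono := intervalIntegral.integral_mono_on hab hint hintC hptup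
        have hintCneg : IntervalIntegrable (fun t : ℝ => -(C' / t)) MeasureTheory.volume a b :=
          hintC.neg
        have hmono2 := intervalIntegral.integral_mono_on hab hintCneg hint hptlow
        have h0 : (0:ℝ) ∉ uIcc a b := by
          rw [uIcc_of_le hab]
          rintro ⟨h1', h2'⟩
          linarith
        have hCint : (∫ t in a..b, C' / t) = C' * (Real.log b - Real.log a) := by
          calc (∫ t in a..b, C' / t) = ∫ t in a..b, C' * t⁻¹ := by
                simp only [div_eq_mul_inv]
            _ = C' * ∫ t in a..b, t⁻¹ := intervalIntegral.integral_const_mul _ _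
            _ = C' * Real.log (b / a) := by rw [integral_inv h0]
            _ = C' * (Real.log b - Real.log a) := by
                rw [Real.log_div (ne_of_gt hb) (ne_of_gt ha)]
        have hCintneg : (∫ t in a..b, -(C' / t)) = -(C' * (Real.log b - Real.log a)) := by
          rw [intervalIntegral.integral_neg, hCint]
        constructor
        · rw [← heq, ← hCint]; exact hmono
        · rw [hCintneg, heq] at hmono2
          linarith
      have hk : Real.log (V (lam * y)) - Real.log (V y) ≤ C' * |Real.log lam| := by
        rcases le_total 1 lam with hl | hl
        · have hab : y ≤ lam * y := le_mul_of_one_le_left hy.le hl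
          obtain ⟨k1, _⟩ := key y (lam * y) hy hab
          have hlog : Real.log (lam * y) - Real.log y = Real.log lam := by
            rw [Real.log_mul (by linarith) (ne_of_gt hy)]; ring
          have habs : Real.log lam = |Real.log lam| :=
            (abs_of_nonneg (Real.log_nonneg hl)).symm
          rw [hlog, habs] at k1
          exact k1
        · have hab : lam * y ≤ y := mul_le_of_le_one_left hy.le hl
          obtain ⟨_, k2⟩ := key (lam * y) y (by positivity) hab
          have hlog : Real.log y - Real.log (lam * y) = -Real.log lam := by
            rw [Real.log_mul (ne_of_gt hlam) (ne_of_gt hy)]; ring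
          have habs : -Real.log lam = |Real.log lam| :=
            (abs_of_nonpos (Real.log_nonpos hlam.le hl)).symm
          rw [hlog, habs] at k2
          exact k2
      have hVl : 0 < V (lam * y) := hVpos _ (by positivity)
      calc V (lam * y) = Real.exp (Real.log (V (lam * y))) := (Real.exp_log hVl).symm
        _ ≤ Real.exp (Real.log (V y) + C' * |Real.log lam|) :=
            Real.exp_le_exp.mpr (by linarith)
        _ = Real.exp (C' * |Real.log lam|) * V y := by
            rw [Real.exp_add, Real.exp_log (hVpos y hy)]; ring
end

section
/- If μ ∈ ba_+ is a bounded finitely additive non-negative measure that is not countably additive, then V_ℰ(μ) := sup_{X ∈ L^∞} (E[U(X + ℰ)] - ∫ X dμ) = +∞. The key step: failure of countable additivity of μ ∈ ba_+ (with μ ≪ P) yields a decreasing sequence of events A_n with P(A_n) → 0 but inf_n μ(A_n) > 0. -/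
open Set Filter MeasureTheory

/-!
Positivity of `φ` and the failure of countable additivity give antitone events `A n` with empty
intersection (so `P (A n) → 0`) whose masses `φ 1_{A n}` decrease to some `δ > 0`. Testing the
supremum with `X = -k • 1_{A n}` gains `k δ` from `-φ X`, while the utility term loses at most
`∫_{A n} (U ℰ - U (x' - k))`, which vanishes as `n → ∞` because `U ∘ ℰ` is integrable.
Hence the supremum exceeds `E[U ℰ] - 1 + k δ` for every `k`.
-/

theorem EReal.iSup_coe_eq_top_of_not_bddAbove {ι : Sort*} {f : ι → ℝ} (hf : ¬ BddAbove (range f)) :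
    ⨆ i, (f i : EReal) = ⊤ := by
  refine iSup_eq_top.mpr fun b hb => ?_
  obtain ⟨r, hbr, -⟩ := EReal.lt_iff_exists_real_btwn.mp hb
  obtain ⟨-, ⟨i, rfl⟩, hri⟩ := not_bddAbove_iff.mp hf r
  exact ⟨i, hbr.trans (EReal.coe_lt_coe_iff.mpr hri)⟩

theorem not_bddAbove_range_of_forall_nat_exists_le {ι : Sort*} {f : ι → ℝ} {c δ : ℝ}
    (hδ : 0 < δ) (h : ∀ k : ℕ, ∃ i, c + k * δ ≤ f i) : ¬ BddAbove (range f) := by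
  rintro ⟨M, hM⟩
  obtain ⟨k, hk⟩ := exists_nat_gt ((M - c) / δ)
  obtain ⟨i, hi⟩ := h k
  have hfi : f i ≤ M := hM ⟨i, rfl⟩
  rw [div_lt_iff₀ hδ] at hk
  linarith

theorem iInf_pos_of_antitone_of_not_tendsto_zero {ψ : ℕ → ℝ} (hanti : Antitone ψ)
    (hnonneg : ∀ n, 0 ≤ ψ n) (h : ¬ Tendsto ψ atTop (nhds 0)) : 0 < ⨅ n, ψ n :=
  (le_ciInf hnonneg).lt_of_ne fun h0 =>
    h (h0 ▸ tendsto_atTop_ciInf hanti ⟨0, forall_mem_range.mpr hnonneg⟩)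

theorem tendsto_measureReal_of_antitone_iInter_eq_empty {Ω : Type*} {m : MeasurableSpace Ω}
    {μ : Measure Ω} [IsFiniteMeasure μ] {A : ℕ → Set Ω} (hA : ∀ n, MeasurableSet (A n))
    (hanti : Antitone A) (hempty : (⋂ n, A n) = ∅) :
    Tendsto (fun n => (μ (A n)).toReal) atTop (nhds 0) := by
  have h := tendsto_measure_iInter_atTop (μ := μ) (fun n => (hA n).nullMeasurableSet) hanti
    ⟨0, measure_ne_top μ _⟩
  rw [hempty, measure_empty] at h
  exact (ENNReal.tendsto_toReal ENNReal.zero_ne_top).comp h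

section IndicatorLp

variable {Ω : Type*} {m : MeasurableSpace Ω} {μ : Measure Ω} {p : ENNReal} {s t : Set Ω}

theorem coeFn_smul_indicatorConstLp_one (hs : MeasurableSet s) (hμs : μ s ≠ ⊤) (c : ℝ) :
    ⇑(c • indicatorConstLp p hs hμs (1 : ℝ)) =ᵐ[μ] s.indicator fun _ => c := by
  filter_upwards [Lp.coeFn_smul c (indicatorConstLp p hs hμs (1 : ℝ)),
    indicatorConstLp_coeFn (p := p) (hs := hs) (hμs := hμs) (c := (1 : ℝ))] with ω h1 h2
  rw [h1, Pi.smul_apply, h2, smul_eq_mul]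
  by_cases hω : ω ∈ s <;> simp [hω]

theorem indicatorConstLp_one_nonneg (hs : MeasurableSet s) (hμs : μ s ≠ ⊤) :
    0 ≤ᵐ[μ] ⇑(indicatorConstLp p hs hμs (1 : ℝ)) := by
  filter_upwards [indicatorConstLp_coeFn (p := p) (hs := hs) (hμs := hμs) (c := (1 : ℝ))]
    with ω hω
  rw [hω]
  exact indicator_nonneg (fun _ _ => zero_le_one) ω

theorem indicatorConstLp_one_mono (hs : MeasurableSet s) (hμs : μ s ≠ ⊤)
    (ht : MeasurableSet t) (hμt : μ t ≠ ⊤) (hst : s ⊆ t) :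
    ⇑(indicatorConstLp p hs hμs (1 : ℝ)) ≤ᵐ[μ] ⇑(indicatorConstLp p ht hμt (1 : ℝ)) := by
  filter_upwards [indicatorConstLp_coeFn (p := p) (hs := hs) (hμs := hμs) (c := (1 : ℝ)),
    indicatorConstLp_coeFn (p := p) (hs := ht) (hμs := hμt) (c := (1 : ℝ))] with ω hωs hωt
  rw [hωs, hωt]
  exact indicator_le_indicator_of_subset hst (fun _ => zero_le_one) ω

end IndicatorLp

section PositiveFunctional

variable {Ω : Type*} {m : MeasurableSpace Ω} {μ : Measure Ω} {p : ENNReal} [Fact (1 ≤ p)]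
  {s : Set Ω} {φ : Lp ℝ p μ →L[ℝ] ℝ}

theorem apply_le_apply_of_ae_le (hpos : ∀ X : Lp ℝ p μ, 0 ≤ᵐ[μ] (X : Ω → ℝ) → 0 ≤ φ X)
    {X Y : Lp ℝ p μ} (h : (X : Ω → ℝ) ≤ᵐ[μ] Y) : φ X ≤ φ Y := by
  have hYX : 0 ≤ᵐ[μ] ⇑(Y - X) := by
    filter_upwards [Lp.coeFn_sub Y X, h] with ω hω hle
    rw [hω, Pi.sub_apply, Pi.zero_apply, sub_nonneg]
    exact hle
  linarith [hpos _ hYX, map_sub φ Y X]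

theorem antitone_apply_indicatorConstLp_one [IsFiniteMeasure μ]
    (hpos : ∀ X : Lp ℝ p μ, 0 ≤ᵐ[μ] (X : Ω → ℝ) → 0 ≤ φ X)
    {A : ℕ → Set Ω} (hA : ∀ n, MeasurableSet (A n)) (hanti : Antitone A) :
    Antitone fun n => φ (indicatorConstLp p (hA n) (measure_ne_top μ (A n)) (1 : ℝ)) :=
  fun _ _ hij => apply_le_apply_of_ae_le hpos (indicatorConstLp_one_mono _ _ _ _ (hanti hij))

theorem apply_indicatorConstLp_one_nonneg (hpos : ∀ X : Lp ℝ p μ, 0 ≤ᵐ[μ] (X : Ω → ℝ) → 0 ≤ φ X)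
    (hs : MeasurableSet s) (hμs : μ s ≠ ⊤) : 0 ≤ φ (indicatorConstLp p hs hμs (1 : ℝ)) :=
  hpos _ (indicatorConstLp_one_nonneg hs hμs)

end PositiveFunctional

section Utility

variable {Ω : Type*} {m : MeasurableSpace Ω} {μ : Measure Ω} {U : ℝ → ℝ} {ℰ : Ω → ℝ} {x' : ℝ}

theorem integral_add_setIntegral_le_integral_utility [IsFiniteMeasure μ] (hU : Monotone U)
    (hℰ : ∀ ω, x' ≤ ℰ ω) (hg : Integrable (fun ω => U (ℰ ω)) μ) {s : Set Ω}
    (hs : MeasurableSet s) {k : ℝ} {X : Ω → ℝ} (hX : X =ᵐ[μ] s.indicator fun _ => -k)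
    (hXint : Integrable (fun ω => U (X ω + ℰ ω)) μ) :
    ∫ ω, U (ℰ ω) ∂μ + ∫ ω in s, (U (x' - k) - U (ℰ ω)) ∂μ ≤ ∫ ω, U (X ω + ℰ ω) ∂μ := by
  have hind : Integrable (s.indicator fun ω => U (x' - k) - U (ℰ ω)) μ :=
    ((integrable_const _).sub hg).indicator hs
  rw [← integral_indicator hs, ← integral_add hg hind]
  refine integral_mono_ae (hg.add hind) hXint ?_
  filter_upwards [hX] with ω hω
  rw [hω]
  by_cases hmem : ω ∈ s
  · have hUle : U (x' - k) ≤ U (-k + ℰ ω) := hU (by linarith [hℰ ω])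
    simp only [indicator_of_mem hmem]
    linarith
  · simp [hmem]

theorem iSup_integral_utility_sub_eq_top [IsFiniteMeasure μ] (hU : Monotone U)
    (hℰ : ∀ ω, x' ≤ ℰ ω) {φ : Lp ℝ ⊤ μ →L[ℝ] ℝ}
    (hpos : ∀ X : Lp ℝ ⊤ μ, 0 ≤ᵐ[μ] (X : Ω → ℝ) → 0 ≤ φ X)
    (hint : ∀ X : Lp ℝ ⊤ μ, Integrable (fun ω => U (X ω + ℰ ω)) μ)
    {A : ℕ → Set Ω} (hA : ∀ n, MeasurableSet (A n)) (hanti : Antitone A)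
    (hempty : (⋂ n, A n) = ∅)
    (hδ : 0 < ⨅ n, φ (indicatorConstLp ⊤ (hA n) (measure_ne_top μ (A n)) (1 : ℝ))) :
    (⨆ X : Lp ℝ ⊤ μ, ((∫ ω, U (X ω + ℰ ω) ∂μ - φ X : ℝ) : EReal)) = ⊤ := by
  have hg : Integrable (fun ω => U (ℰ ω)) μ := (hint 0).congr <| by
    filter_upwards [Lp.coeFn_zero ℝ ⊤ μ] with ω hω
    rw [hω, Pi.zero_apply, zero_add]
  refine EReal.iSup_coe_eq_top_of_not_bddAbove <| not_bddAbove_range_of_forall_nat_exists_le hδ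
    (c := ∫ ω, U (ℰ ω) ∂μ - 1) fun k => ?_
  have hloss : Tendsto (fun n => ∫ ω in A n, (U (x' - k) - U (ℰ ω)) ∂μ) atTop (nhds 0) := by
    have h := hanti.tendsto_setIntegral hA (f := fun ω => U (x' - k) - U (ℰ ω))
      ((integrable_const _).sub hg).integrableOn
    rwa [hempty, Measure.restrict_empty, integral_zero_measure] at h
  obtain ⟨n, hn⟩ := (hloss.eventually (lt_mem_nhds neg_one_lt_zero)).exists
  refine ⟨(-(k : ℝ)) • indicatorConstLp ⊤ (hA n) (measure_ne_top μ (A n)) (1 : ℝ), ?_⟩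
  have hutil := integral_add_setIntegral_le_integral_utility hU hℰ hg (hA n)
    (coeFn_smul_indicatorConstLp_one (hA n) (measure_ne_top μ (A n)) (-(k : ℝ))) (hint _)
  have hδn := ciInf_le ⟨0, forall_mem_range.mpr fun n =>
    apply_indicatorConstLp_one_nonneg hpos (hA n) (measure_ne_top μ (A n))⟩ n
  rw [map_smul, smul_eq_mul]
  linarith [mul_le_mul_of_nonneg_left hδn k.cast_nonneg]

end Utility

/-- If `μ ∈ ba_+` (a non-negative finitely additive measure, identified with a
positive continuous linear functional `φ` on `L^∞`, `μ ≪ P`) is not countably additive, then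
`V_ℰ(μ) = sup_{X ∈ L^∞} (E[U(X + ℰ)] - ∫ X dμ) = +∞`.  The key step: failure of countable
additivity yields a decreasing sequence of events `A n` with `P (A n) → 0` but
`inf_n μ (A n) > 0`. -/
theorem conjugate_eq_top_of_not_countably_additive
    {Ω : Type*} {m : MeasurableSpace Ω} (P : Measure Ω) [IsProbabilityMeasure P]
    (U : ℝ → ℝ) (hU : StrictMono U)
    (ℰ : Ω → ℝ) (x' : ℝ) (hℰ : ∀ ω, x' ≤ ℰ ω)
    (φ : Lp ℝ ⊤ P →L[ℝ] ℝ)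
    (hpos : ∀ X : Lp ℝ ⊤ P, 0 ≤ᵐ[P] (X : Ω → ℝ) → 0 ≤ φ X)
    (hint : ∀ X : Lp ℝ ⊤ P, Integrable (fun ω => U (X ω + ℰ ω)) P)
    (hna : ¬ ∀ (A : ℕ → Set Ω) (hA : ∀ n, MeasurableSet (A n)), Antitone A →
        (⋂ n, A n) = ∅ →
        Tendsto (fun n =>
            φ (indicatorConstLp ⊤ (hA n) (measure_ne_top P (A n)) (1 : ℝ))) atTop (nhds 0)) :
    (∃ (A : ℕ → Set Ω) (hA : ∀ n, MeasurableSet (A n)), Antitone A ∧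
        Tendsto (fun n => (P (A n)).toReal) atTop (nhds 0) ∧
        0 < ⨅ n, φ (indicatorConstLp ⊤ (hA n) (measure_ne_top P (A n)) (1 : ℝ))) ∧
      (⨆ X : Lp ℝ ⊤ P, ((∫ ω, U (X ω + ℰ ω) ∂P - φ X : ℝ) : EReal)) = ⊤ := by
  push Not at hna
  obtain ⟨A, hA, hanti, hempty, hnot⟩ := hna
  have hδ := iInf_pos_of_antitone_of_not_tendsto_zero
    (antitone_apply_indicatorConstLp_one hpos hA hanti)
    (fun n => apply_indicatorConstLp_one_nonneg hpos (hA n) (measure_ne_top P (A n))) hnot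
  exact ⟨⟨A, hA, hanti, tendsto_measureReal_of_antitone_iInter_eq_empty hA hanti hempty, hδ⟩,
    iSup_integral_utility_sub_eq_top hU.monotone hℰ hpos hint hA hanti hempty hδ⟩
end

section
/- Let D be a nonempty convex set of non-negative countably additive finite measures absolutely continuous w.r.t. P, and suppose μ̂ ∈ D minimizes μ ↦ E[V(dμ/dP) + (dμ/dP)ℰ] over D, with finite value. Then for any μ ∈ D with E[V(dμ/dP) + (dμ/dP)ℰ] < ∞ one has μ ≪ μ̂ (i.e. there is no event A with μ̂(A) = 0 and μ(A) > 0). -/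
/-!
Write `f, g` for the densities of `μ, μ̂` with respect to `P` and `Φ_ω(y) = V y + y ℰ(ω)`, which is
convex in `y`. For `0 < t ≤ 1` the measure `t μ + (1 - t) μ̂ ∈ D` has density `t f + (1 - t) g`, so
by minimality of `μ̂` the difference quotients `(Φ(t f + (1 - t) g) - Φ(g)) / t` have nonnegative
integrals. By convexity they decrease as `t ↓ 0`, so by monotone convergence they stay bounded
below almost everywhere. On `{g = 0 < f}`, however, they equal `f (V(t f) - V 0) / (t f) + f ℰ`,
which tends to `-∞` because `V'(0+) = -∞`. Hence `{g = 0} ⊆ {f = 0}` a.e., that is, `μ ≪ μ̂`.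
-/

open Set Filter MeasureTheory NNReal Topology

lemma ConvexOn.slope_smul_add_smul_mono {E : Type*} [AddCommGroup E] [Module ℝ E] {s : Set E}
    {φ : E → ℝ} (hφ : ConvexOn ℝ s φ) {a b : E} (ha : a ∈ s) (hb : b ∈ s) {r t : ℝ}
    (hr : 0 < r) (hrt : r ≤ t) (ht : t ≤ 1) :
    (φ (r • a + (1 - r) • b) - φ b) / r ≤ (φ (t • a + (1 - t) • b) - φ b) / t := by
  have ht0 : 0 < t := hr.trans_le hrt
  -- the point at parameter `r` is a convex combination of `b` and the point at parameter `t`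
  have hmix : r • a + (1 - r) • b = (r / t) • (t • a + (1 - t) • b) + (1 - r / t) • b := by
    match_scalars
    · field_simp
    · field_simp
      ring
  have hpt : t • a + (1 - t) • b ∈ s := hφ.1 ha hb ht0.le (by linarith) (by ring)
  have hconv : φ ((r / t) • (t • a + (1 - t) • b) + (1 - r / t) • b) ≤
      (r / t) • φ (t • a + (1 - t) • b) + (1 - r / t) • φ b :=
    hφ.2 hpt hb (by positivity) (by rw [sub_nonneg, div_le_one ht0]; exact hrt) (by ring)
  rw [← hmix, smul_eq_mul, smul_eq_mul] at hconv
  calc (φ (r • a + (1 - r) • b) - φ b) / r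
      ≤ (r / t * (φ (t • a + (1 - t) • b) - φ b)) / r := by gcongr; linarith
    _ = (φ (t • a + (1 - t) • b) - φ b) / t := by field_simp

lemma ConvexOn.apply_add_deriv_mul_sub_le {S : Set ℝ} {f : ℝ → ℝ} (hf : ConvexOn ℝ S f)
    {x y : ℝ} (hx : x ∈ S) (hy : y ∈ S) (hfx : DifferentiableAt ℝ f x) :
    f x + deriv f x * (y - x) ≤ f y := by
  rcases lt_trichotomy y x with hyx | rfl | hxy
  · have h := hf.slope_le_deriv hy hx hyx hfx
    rw [slope_def_field, div_le_iff₀ (sub_pos.2 hyx)] at h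
    linarith
  · simp
  · have h := hf.deriv_le_slope hx hy hxy hfx
    rw [slope_def_field, le_div_iff₀ (sub_pos.2 hxy)] at h
    linarith

lemma ConvexOn.tendsto_slope_zero_atBot {V : ℝ → ℝ} (hV : ConvexOn ℝ (Ici 0) V)
    (hVdiff : ∀ y, 0 < y → DifferentiableAt ℝ V y) (hV' : Tendsto (deriv V) (𝓝[>] 0) atBot) :
    Tendsto (fun y => (V y - V 0) / y) (𝓝[>] 0) atBot := by
  refine tendsto_atBot_mono' _ ?_ hV'
  filter_upwards [self_mem_nhdsWithin] with y (hy : 0 < y)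
  simpa [slope_def_field] using hV.slope_le_deriv (mem_Ici.2 le_rfl) hy.le hy (hVdiff y hy)

lemma ContinuousOn.measurable_comp_of_nonneg {Ω : Type*} [MeasurableSpace Ω] {V : ℝ → ℝ}
    (hV : ContinuousOn V (Ioi 0)) {h : Ω → ℝ} (hh : Measurable h) (h0 : ∀ ω, 0 ≤ h ω) :
    Measurable fun ω => V (h ω) := by
  have hpw : Measurable ((Ioi (0 : ℝ)).piecewise V fun _ => V 0) :=
    hV.measurable_piecewise continuousOn_const measurableSet_Ioi
  convert hpw.comp hh using 1
  funext ω
  rcases (h0 ω).eq_or_lt with hω | hω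
  · simp [← hω]
  · simp [piecewise_eq_of_mem _ _ _ (show h ω ∈ Ioi 0 from hω)]

lemma Measure.absolutelyContinuous_of_ae_rnDeriv_eq_zero {Ω : Type*} [MeasurableSpace Ω]
    {μ ν P : Measure Ω} [μ.HaveLebesgueDecomposition P] (hμ : μ ≪ P)
    (h : ∀ᵐ ω ∂P, ν.rnDeriv P ω = 0 → μ.rnDeriv P ω = 0) : μ ≪ ν := by
  refine Measure.AbsolutelyContinuous.mk fun s hs hνs => ?_
  have hν0 : ∀ᵐ ω ∂P, ω ∈ s → ν.rnDeriv P ω = 0 :=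
    (setLIntegral_eq_zero_iff hs (Measure.measurable_rnDeriv ν P)).1
      (nonpos_iff_eq_zero.1 (hνs ▸ Measure.setLIntegral_rnDeriv_le s))
  rw [← Measure.setLIntegral_rnDeriv' hμ hs,
    setLIntegral_eq_zero_iff hs (Measure.measurable_rnDeriv μ P)]
  filter_upwards [h, hν0] with ω h hν hω using h (hν hω)

lemma Measure.toReal_rnDeriv_convexCombination {Ω : Type*} [MeasurableSpace Ω]
    (μ ν P : Measure Ω) [IsFiniteMeasure μ] [IsFiniteMeasure ν] [SigmaFinite P] {t : ℝ}
    (ht0 : 0 ≤ t) (ht1 : t ≤ 1) :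
    (fun ω => ((t.toNNReal • μ + (1 - t.toNNReal) • ν).rnDeriv P ω).toReal) =ᵐ[P]
      fun ω => t * (μ.rnDeriv P ω).toReal + (1 - t) * (ν.rnDeriv P ω).toReal := by
  filter_upwards [Measure.rnDeriv_add (t.toNNReal • μ) ((1 - t.toNNReal) • ν) P,
    Measure.rnDeriv_smul_left μ P _, Measure.rnDeriv_smul_left ν P _,
    Measure.rnDeriv_ne_top μ P, Measure.rnDeriv_ne_top ν P] with ω hadd hμ hν hμ_top hν_top
  rw [hadd, Pi.add_apply, hμ, hν]
  simp only [Pi.smul_apply, ENNReal.smul_def, smul_eq_mul]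
  rw [ENNReal.toReal_add (by finiteness) (by finiteness), ENNReal.toReal_mul, ENNReal.toReal_mul,
    ENNReal.coe_toReal, ENNReal.coe_toReal, NNReal.coe_sub (Real.toNNReal_le_one.2 ht1),
    Real.coe_toNNReal _ ht0, NNReal.coe_one]

lemma ae_bddBelow_of_antitone_of_integral_ge {Ω : Type*} [MeasurableSpace Ω] {P : Measure Ω}
    {u : ℕ → Ω → ℝ} {C : ℝ}
    (hu : ∀ n, Integrable (u n) P) (hanti : ∀ᵐ ω ∂P, Antitone fun n => u n ω)
    (hC : ∀ n, C ≤ ∫ ω, u n ω ∂P) : ∀ᵐ ω ∂P, BddBelow (range fun n => u n ω) := by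
  set v : ℕ → Ω → ENNReal := fun n ω => ENNReal.ofReal (u 0 ω - u n ω)
  have hv_meas : ∀ n, AEMeasurable (v n) P := fun n =>
    ((hu 0).sub (hu n)).aemeasurable.ennreal_ofReal
  have hv_mono : ∀ᵐ ω ∂P, Monotone fun n => v n ω := by
    filter_upwards [hanti] with ω hω i j hij
    exact ENNReal.ofReal_le_ofReal (by linarith [hω hij])
  have hv_le : ∀ n, ∫⁻ ω, v n ω ∂P ≤ ENNReal.ofReal (∫ ω, u 0 ω ∂P - C) := by
    intro n
    have h := ofReal_integral_eq_lintegral_ofReal ((hu 0).sub (hu n))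
      (by filter_upwards [hanti] with ω hω using sub_nonneg.2 (hω n.zero_le))
    rw [Pi.sub_def] at h
    rw [← h, integral_sub (hu 0) (hu n)]
    exact ENNReal.ofReal_le_ofReal (by linarith [hC n])
  have hsup : ∫⁻ ω, ⨆ n, v n ω ∂P ≠ ⊤ := by
    rw [lintegral_iSup' hv_meas hv_mono]
    exact ((iSup_le hv_le).trans_lt ENNReal.ofReal_lt_top).ne
  filter_upwards [ae_lt_top' (AEMeasurable.iSup hv_meas) hsup] with ω hω
  refine ⟨u 0 ω - (⨆ n, v n ω).toReal, ?_⟩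
  rintro _ ⟨n, rfl⟩
  have h := ENNReal.toReal_mono hω.ne (le_iSup (fun n => v n ω) n)
  simp only [v, ENNReal.toReal_ofReal'] at h
  linarith [le_max_left (u 0 ω - u n ω) 0]

def energyIntegrand {Ω : Type*} (V : ℝ → ℝ) (ℰ : Ω → ℝ) (ω : Ω) (y : ℝ) : ℝ := V y + y * ℰ ω

lemma convexOn_energyIntegrand {Ω : Type*} {V : ℝ → ℝ} (hV : ConvexOn ℝ (Ici 0) V)
    (ℰ : Ω → ℝ) (ω : Ω) : ConvexOn ℝ (Ici 0) (energyIntegrand V ℰ ω) :=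
  hV.add ((LinearMap.mulRight ℝ (ℰ ω)).convexOn (convex_Ici 0))

section Energy

variable {Ω : Type*} [MeasurableSpace Ω] {P : Measure Ω} [IsFiniteMeasure P] {V : ℝ → ℝ}
  {ℰ : Ω → ℝ} {x' : ℝ} {f g : Ω → ℝ}

lemma integrable_energyIntegrand_convexCombination (hV : ConvexOn ℝ (Ici 0) V)
    (hV1 : DifferentiableAt ℝ V 1) (hℰ : ∀ ω, x' ≤ ℰ ω)
    (hf0 : ∀ ω, 0 ≤ f ω) (hg0 : ∀ ω, 0 ≤ g ω) (hfm : Measurable f) (hgm : Measurable g)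
    (hfi : Integrable f P) (hgi : Integrable g P)
    (hΦf : Integrable (fun ω => energyIntegrand V ℰ ω (f ω)) P)
    (hΦg : Integrable (fun ω => energyIntegrand V ℰ ω (g ω)) P) {t : ℝ} (ht0 : 0 ≤ t)
    (ht1 : t ≤ 1) :
    Integrable (fun ω => energyIntegrand V ℰ ω (t * f ω + (1 - t) * g ω)) P := by
  have hVc : ContinuousOn V (Ioi 0) := by simpa using hV.continuousOn_interior
  -- `ℰ` itself is not assumed measurable: measurability of `h ℰ` comes from that of `V ∘ h`
  have hmul : ∀ {h : Ω → ℝ}, Measurable h → (∀ ω, 0 ≤ h ω) →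
      Integrable (fun ω => energyIntegrand V ℰ ω (h ω)) P →
      AEStronglyMeasurable (fun ω => h ω * ℰ ω) P := fun hm h0 hi =>
    (hi.aestronglyMeasurable.sub (hVc.measurable_comp_of_nonneg hm h0).aestronglyMeasurable).congr
      (Eventually.of_forall fun ω => by simp [energyIntegrand])
  set h := fun ω => t * f ω + (1 - t) * g ω
  have h0 : ∀ ω, 0 ≤ h ω := fun ω =>
    add_nonneg (mul_nonneg ht0 (hf0 ω)) (mul_nonneg (sub_nonneg.2 ht1) (hg0 ω))
  have hhi : Integrable h P := (hfi.const_mul t).add (hgi.const_mul (1 - t))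
  refine integrable_of_le_of_le (g₁ := fun ω => V 1 + deriv V 1 * (h ω - 1) + h ω * x')
    (g₂ := fun ω => t * energyIntegrand V ℰ ω (f ω) + (1 - t) * energyIntegrand V ℰ ω (g ω))
    ?_ (Eventually.of_forall fun ω => ?_) (Eventually.of_forall fun ω => ?_)
    (((integrable_const _).add ((hhi.sub (integrable_const 1)).const_mul _)).add
      (hhi.mul_const x'))
    ((hΦf.const_mul t).add (hΦg.const_mul (1 - t)))
  · refine (hVc.measurable_comp_of_nonneg ((hfm.const_mul t).add (hgm.const_mul (1 - t))) h0
      ).aestronglyMeasurable.add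
      ((((hmul hfm hf0 hΦf).const_mul t).add ((hmul hgm hg0 hΦg).const_mul (1 - t))).congr
        (Eventually.of_forall fun ω => ?_))
    simp only [Pi.add_apply]
    ring
  · exact add_le_add (hV.apply_add_deriv_mul_sub_le (mem_Ici.2 zero_le_one) (h0 ω) hV1)
      (mul_le_mul_of_nonneg_left (hℰ ω) (h0 ω))
  · exact (convexOn_energyIntegrand hV ℰ ω).2 (hf0 ω) (hg0 ω) ht0 (sub_nonneg.2 ht1) (by ring)

theorem ae_eq_zero_of_minimal_energy_on_segment (hV : ConvexOn ℝ (Ici 0) V)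
    (hVdiff : ∀ y, 0 < y → DifferentiableAt ℝ V y) (hV' : Tendsto (deriv V) (𝓝[>] 0) atBot)
    (hℰ : ∀ ω, x' ≤ ℰ ω)
    (hf0 : ∀ ω, 0 ≤ f ω) (hg0 : ∀ ω, 0 ≤ g ω) (hfm : Measurable f) (hgm : Measurable g)
    (hfi : Integrable f P) (hgi : Integrable g P)
    (hΦf : Integrable (fun ω => energyIntegrand V ℰ ω (f ω)) P)
    (hΦg : Integrable (fun ω => energyIntegrand V ℰ ω (g ω)) P)
    (hmin : ∀ t : ℝ, 0 < t → t ≤ 1 →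
      Integrable (fun ω => energyIntegrand V ℰ ω (t * f ω + (1 - t) * g ω)) P →
      ∫ ω, energyIntegrand V ℰ ω (g ω) ∂P ≤
        ∫ ω, energyIntegrand V ℰ ω (t * f ω + (1 - t) * g ω) ∂P) :
    ∀ᵐ ω ∂P, g ω = 0 → f ω = 0 := by
  set c : ℕ → ℝ := fun n => 1 / ((n : ℝ) + 1) with c_def
  have hc_pos : ∀ n, 0 < c n := fun n => by positivity
  have hc_le : ∀ n, c n ≤ 1 := fun n => by
    rw [c_def, div_le_one (by positivity)]
    linarith [n.cast_nonneg (α := ℝ)]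
  have hc_anti : Antitone c := fun i j hij => by
    simp only [c_def]
    gcongr
  have hΦ : ∀ n, Integrable (fun ω => energyIntegrand V ℰ ω (c n * f ω + (1 - c n) * g ω)) P :=
    fun n => integrable_energyIntegrand_convexCombination hV (hVdiff 1 one_pos) hℰ hf0 hg0 hfm
      hgm hfi hgi hΦf hΦg (hc_pos n).le (hc_le n)
  set u : ℕ → Ω → ℝ := fun n ω =>
    (energyIntegrand V ℰ ω (c n * f ω + (1 - c n) * g ω) - energyIntegrand V ℰ ω (g ω)) / c n
  have hu_int : ∀ n, Integrable (u n) P := fun n => ((hΦ n).sub hΦg).div_const _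
  have hu_anti : ∀ ω, Antitone fun n => u n ω := fun ω i j hij =>
    (convexOn_energyIntegrand hV ℰ ω).slope_smul_add_smul_mono (hf0 ω) (hg0 ω) (hc_pos j)
      (hc_anti hij) (hc_le i)
  have hu_nonneg : ∀ n, 0 ≤ ∫ ω, u n ω ∂P := fun n => by
    rw [integral_div, integral_sub (hΦ n) hΦg]
    exact div_nonneg (sub_nonneg.2 (hmin _ (hc_pos n) (hc_le n) (hΦ n))) (hc_pos n).le
  filter_upwards [ae_bddBelow_of_antitone_of_integral_ge hu_int (ae_of_all _ hu_anti)
    hu_nonneg] with ω hbdd hg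
  by_contra hf
  have hfpos : 0 < f ω := (hf0 ω).lt_of_ne' hf
  have hcf : Tendsto (fun n => c n * f ω) atTop (𝓝[>] 0) :=
    tendsto_nhdsWithin_iff.2
      ⟨by simpa [c_def] using tendsto_one_div_add_atTop_nhds_zero_nat.mul_const (f ω),
        Eventually.of_forall fun n => mul_pos (hc_pos n) hfpos⟩
  have hu_atBot : Tendsto (fun n => u n ω) atTop atBot := by
    refine (tendsto_atBot_add_const_right _ (f ω * ℰ ω)
      ((((hV.tendsto_slope_zero_atBot hVdiff hV').comp hcf).atBot_mul_const' hfpos))).congr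
      fun n => ?_
    have := (hc_pos n).ne'
    simp only [Function.comp, u, energyIntegrand, hg, mul_zero, add_zero]
    field_simp
    ring
  exact not_bddBelow_of_tendsto_atBot hu_atBot hbdd

end Energy

theorem minimizer_maximal_support_general
    {Ω : Type*} {m : MeasurableSpace Ω} (P : Measure Ω) [IsProbabilityMeasure P]
    (V : ℝ → ℝ) (hVconv : StrictConvexOn ℝ (Ici 0) V)
    (hVdiff : ∀ y : ℝ, 0 < y → DifferentiableAt ℝ V y)
    (hV'0 : Tendsto (deriv V) (nhdsWithin 0 (Ioi 0)) atBot)  -- V'(0) = -∞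
    (ℰ : Ω → ℝ) (x' : ℝ) (hℰ : ∀ ω, x' ≤ ℰ ω)
    (D : Set (Measure Ω))
    (hconv : ∀ μ ν, μ ∈ D → ν ∈ D → ∀ a b : ℝ≥0, a + b = 1 → a • μ + b • ν ∈ D)
    (hDP : ∀ μ ∈ D, μ ≪ P ∧ IsFiniteMeasure μ)
    (μhat : Measure Ω) (hμhatD : μhat ∈ D)
    (hfin : Integrable (fun ω =>
        V ((μhat.rnDeriv P ω).toReal) + (μhat.rnDeriv P ω).toReal * ℰ ω) P)
    (hmin : ∀ μ ∈ D,
        Integrable (fun ω => V ((μ.rnDeriv P ω).toReal) + (μ.rnDeriv P ω).toReal * ℰ ω) P →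
        ∫ ω, (V ((μhat.rnDeriv P ω).toReal) + (μhat.rnDeriv P ω).toReal * ℰ ω) ∂P ≤
          ∫ ω, (V ((μ.rnDeriv P ω).toReal) + (μ.rnDeriv P ω).toReal * ℰ ω) ∂P) :
    ∀ μ ∈ D,
      Integrable (fun ω => V ((μ.rnDeriv P ω).toReal) + (μ.rnDeriv P ω).toReal * ℰ ω) P →
      μ ≪ μhat := by
  intro μ hμD hμint
  obtain ⟨hμP, _⟩ := hDP μ hμD
  obtain ⟨-, _⟩ := hDP μhat hμhatD
  have hsegment : ∀ t : ℝ, 0 < t → t ≤ 1 →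
      Integrable (fun ω => energyIntegrand V ℰ ω
        (t * (μ.rnDeriv P ω).toReal + (1 - t) * (μhat.rnDeriv P ω).toReal)) P →
      ∫ ω, energyIntegrand V ℰ ω (μhat.rnDeriv P ω).toReal ∂P ≤
        ∫ ω, energyIntegrand V ℰ ω
          (t * (μ.rnDeriv P ω).toReal + (1 - t) * (μhat.rnDeriv P ω).toReal) ∂P := by
    intro t ht0 ht1 hint
    have hΦ : (fun ω => energyIntegrand V ℰ ω
        ((t.toNNReal • μ + (1 - t.toNNReal) • μhat).rnDeriv P ω).toReal) =ᵐ[P]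
        fun ω => energyIntegrand V ℰ ω
          (t * (μ.rnDeriv P ω).toReal + (1 - t) * (μhat.rnDeriv P ω).toReal) := by
      filter_upwards [Measure.toReal_rnDeriv_convexCombination μ μhat P ht0.le ht1] with ω h
      rw [h]
    rw [← integral_congr_ae hΦ]
    exact hmin _ (hconv μ μhat hμD hμhatD _ _
      (add_tsub_cancel_of_le (Real.toNNReal_le_one.2 ht1))) (hint.congr hΦ.symm)
  refine Measure.absolutelyContinuous_of_ae_rnDeriv_eq_zero hμP ?_
  filter_upwards [ae_eq_zero_of_minimal_energy_on_segment hVconv.convexOn hVdiff hV'0 hℰ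
    (fun _ => ENNReal.toReal_nonneg) (fun _ => ENNReal.toReal_nonneg)
    (Measure.measurable_rnDeriv μ P).ennreal_toReal
    (Measure.measurable_rnDeriv μhat P).ennreal_toReal
    Measure.integrable_toReal_rnDeriv Measure.integrable_toReal_rnDeriv hμint hfin hsegment,
    Measure.rnDeriv_ne_top μ P] with ω h hμ_top hμhat_zero
  exact ((ENNReal.toReal_eq_zero_iff _).1 (h (by simp [hμhat_zero]))).resolve_right hμ_top

/-- If `μ̂` minimizes `μ ↦ E[V(dμ/dP) + (dμ/dP) ℰ]` over a nonempty convex set `D`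
of non-negative countably additive finite measures `≪ P`, with finite value, then any `μ ∈ D`
with finite value satisfies `μ ≪ μ̂`. -/
theorem minimizer_maximal_support
    {Ω : Type*} {m : MeasurableSpace Ω} (P : Measure Ω) [IsProbabilityMeasure P]
    (V : ℝ → ℝ) (hVconv : StrictConvexOn ℝ (Ici 0) V)
    (hVdiff : ∀ y : ℝ, 0 < y → DifferentiableAt ℝ V y)
    (hV'0 : Tendsto (deriv V) (nhdsWithin 0 (Ioi 0)) atBot)  -- V'(0) = -∞
    (ℰ : Ω → ℝ) (x' : ℝ) (hℰ : ∀ ω, x' ≤ ℰ ω)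
    (D : Set (Measure Ω)) (hD : D.Nonempty)
    (hconv : ∀ μ ν, μ ∈ D → ν ∈ D → ∀ a b : ℝ≥0, a + b = 1 → a • μ + b • ν ∈ D)
    (hDP : ∀ μ ∈ D, μ ≪ P ∧ IsFiniteMeasure μ)
    (μhat : Measure Ω) (hμhatD : μhat ∈ D)
    (hfin : Integrable (fun ω =>
        V ((μhat.rnDeriv P ω).toReal) + (μhat.rnDeriv P ω).toReal * ℰ ω) P)
    (hmin : ∀ μ ∈ D,
        Integrable (fun ω => V ((μ.rnDeriv P ω).toReal) + (μ.rnDeriv P ω).toReal * ℰ ω) P →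
        ∫ ω, (V ((μhat.rnDeriv P ω).toReal) + (μhat.rnDeriv P ω).toReal * ℰ ω) ∂P ≤
          ∫ ω, (V ((μ.rnDeriv P ω).toReal) + (μ.rnDeriv P ω).toReal * ℰ ω) ∂P) :
    ∀ μ ∈ D,
      Integrable (fun ω => V ((μ.rnDeriv P ω).toReal) + (μ.rnDeriv P ω).toReal * ℰ ω) P →
      μ ≪ μhat :=
  minimizer_maximal_support_general (m := m) P V hVconv hVdiff hV'0 ℰ x' hℰ D hconv hDP μhat hμhatD
    hfin hmin
end

section
/- Growth bound for the dual value function: if v(y) := inf_{Q ∈ M} E[V(y·(dQ/dP)) + y·(dQ/dP)·ℰ] over a nonempty family M of probability measures with finite entropy, ℰ ≥ x' a.s., and V satisfies y|V'(y)| ≤ C·V(y) for all y > 0 with C > 1, then the (attained) derivative satisfies y·v'(y) ≤ C·v(y) + C'·y for a constant C' depending only on C and x'. -/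
open Set Filter MeasureTheory

/-- Growth bound for the dual value function.  If
`v y = inf_{Q ∈ M} E[V(y dQ/dP) + y (dQ/dP) ℰ]` is attained at a minimizer `Q̂_y` and its
derivative `vd y` is given by the formula `E[(dQ̂_y/dP) V'(y dQ̂_y/dP) + (dQ̂_y/dP) ℰ]`, with
`ℰ ≥ x'` a.s. and `y |V'(y)| ≤ C V(y)` for all `y > 0` with `C > 1`, then
`y * vd y ≤ C * v y + C' * y` for a constant `C'` depending only on `C` and `x'`. -/
theorem dual_value_growth_bound
    {Ω : Type*} {m : MeasurableSpace Ω} (P : Measure Ω) [IsProbabilityMeasure P]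
    (V : ℝ → ℝ) (hVconv : ConvexOn ℝ (Ici 0) V)
    (hVdiff : ∀ y : ℝ, 0 < y → DifferentiableAt ℝ V y)
    (hV0 : 0 ≤ V 0)
    (C : ℝ) (hC : 1 < C)
    (hgrowth : ∀ y : ℝ, 0 < y → y * |deriv V y| ≤ C * V y)
    (M : Set (Measure Ω)) (hM : M.Nonempty)
    (hMP : ∀ Q ∈ M, Q ≪ P ∧ IsProbabilityMeasure Q)
    (ℰ : Ω → ℝ) (x' : ℝ) (hℰ : ∀ᵐ ω ∂P, x' ≤ ℰ ω)
    (hℰint : ∀ Q ∈ M, Integrable ℰ Q)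
    (v vd : ℝ → ℝ)
    (hmin : ∀ y : ℝ, 0 < y → ∃ Q ∈ M,
      Integrable (fun ω =>
        V (y * (Q.rnDeriv P ω).toReal) + y * (Q.rnDeriv P ω).toReal * ℰ ω) P ∧
      Integrable (fun ω =>
        (Q.rnDeriv P ω).toReal * deriv V (y * (Q.rnDeriv P ω).toReal)) P ∧
      v y = ∫ ω, (V (y * (Q.rnDeriv P ω).toReal) + y * (Q.rnDeriv P ω).toReal * ℰ ω) ∂P ∧
      vd y = ∫ ω, ((Q.rnDeriv P ω).toReal * deriv V (y * (Q.rnDeriv P ω).toReal) +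
        (Q.rnDeriv P ω).toReal * ℰ ω) ∂P) :
    ∃ C' : ℝ, ∀ y : ℝ, 0 < y → y * vd y ≤ C * v y + C' * y := by
  refine ⟨(1 - C) * x', fun y hy => ?_⟩
  obtain ⟨Q, hQM, hInt1, hInt2, hv, hvd⟩ := hmin y hy
  obtain ⟨hQP, hQprob⟩ := hMP Q hQM
  haveI := hQprob
  set f : Ω → ℝ := fun ω => (Q.rnDeriv P ω).toReal with hfdef
  have hf0 : ∀ ω, 0 ≤ f ω := fun ω => ENNReal.toReal_nonneg
  have hfℰ : Integrable (fun ω => f ω * ℰ ω) P := by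
    simpa [smul_eq_mul] using
      (MeasureTheory.integrable_rnDeriv_smul_iff hQP).mpr (hℰint Q hQM)
  have hIfℰ : ∫ ω, f ω * ℰ ω ∂P = ∫ ω, ℰ ω ∂Q := by
    simpa [smul_eq_mul] using MeasureTheory.integral_rnDeriv_smul hQP (f := ℰ)
  have hQℰ : x' ≤ ∫ ω, ℰ ω ∂Q := by
    have hae : ∀ᵐ ω ∂Q, x' ≤ ℰ ω := hℰ.filter_mono hQP.ae_le
    calc x' = ∫ _, x' ∂Q := by simp
      _ ≤ ∫ ω, ℰ ω ∂Q := integral_mono_ae (integrable_const _) (hℰint Q hQM) hae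
  have hyfℰ : Integrable (fun ω => y * f ω * ℰ ω) P := by
    simpa [mul_assoc] using hfℰ.const_mul y
  have hVint : Integrable (fun ω => V (y * f ω)) P := by
    refine (hInt1.sub hyfℰ).congr (ae_of_all _ fun ω => ?_)
    simp only [Pi.sub_apply]
    ring
  have hpt : ∀ ω, y * (f ω * deriv V (y * f ω)) ≤ C * V (y * f ω) := by
    intro ω
    rcases eq_or_lt_of_le (hf0 ω) with h0 | hpos
    · have : (0:ℝ) ≤ C * V 0 := mul_nonneg (by linarith) hV0
      simpa [← h0] using this
    · have hyf : 0 < y * f ω := mul_pos hy hpos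
      have hg := hgrowth _ hyf
      calc y * (f ω * deriv V (y * f ω)) = (y * f ω) * deriv V (y * f ω) := by ring
        _ ≤ (y * f ω) * |deriv V (y * f ω)| :=
            mul_le_mul_of_nonneg_left (le_abs_self _) hyf.le
        _ ≤ C * V (y * f ω) := hg
  -- split the integrals
  have hvd' : vd y = (∫ ω, f ω * deriv V (y * f ω) ∂P) + ∫ ω, f ω * ℰ ω ∂P := by
    rw [hvd]; exact integral_add hInt2 hfℰ
  have hv' : v y = (∫ ω, V (y * f ω) ∂P) + y * ∫ ω, f ω * ℰ ω ∂P := by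
    rw [hv, integral_add hVint hyfℰ]
    congr 1
    rw [← integral_const_mul]
    congr 1; ext ω; ring
  have hmono : y * ∫ ω, f ω * deriv V (y * f ω) ∂P ≤ C * ∫ ω, V (y * f ω) ∂P := by
    rw [← integral_const_mul, ← integral_const_mul]
    exact integral_mono (hInt2.const_mul y) (hVint.const_mul C) hpt
  have hIQ : x' ≤ ∫ ω, f ω * ℰ ω ∂P := hIfℰ ▸ hQℰ
  have key : (1 - C) * (y * ∫ ω, f ω * ℰ ω ∂P) ≤ (1 - C) * x' * y := by
    nlinarith [mul_nonneg (mul_nonneg (sub_nonneg.mpr hC.le) hy.le) (sub_nonneg.mpr hIQ)]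
  calc y * vd y = y * ∫ ω, f ω * deriv V (y * f ω) ∂P + y * ∫ ω, f ω * ℰ ω ∂P := by
        rw [hvd']; ring
    _ ≤ C * ∫ ω, V (y * f ω) ∂P + y * ∫ ω, f ω * ℰ ω ∂P := by linarith [hmono]
    _ ≤ C * v y + (1 - C) * x' * y := by rw [hv']; nlinarith [key]
end

section
/- Entropic penalty representation of the indifference price: p_ℰ(B) = inf_{Q ∈ M_V^a} { E_Q[B] + α(Q) }, where α(Q) := inf_{y>0} (1/y)·( E[V(y·dQ/dP) + y·(dQ/dP)·ℰ] - v_ℰ ) ≥ 0 and v_ℰ = inf_{μ ∈ Cone(M_V^a)} E[V(dμ/dP) + (dμ/dP)ℰ]. -/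
open Set Filter MeasureTheory

/-- The entropic penalty `α(Q) = inf_{y>0} (1/y) (E[V(y dQ/dP) + y (dQ/dP) ℰ] - v_ℰ)`. -/
noncomputable def entropicPenalty {Ω : Type*} {m : MeasurableSpace Ω} (P : Measure Ω)
    (V : ℝ → ℝ) (ℰ : Ω → ℝ) (vℰ : ℝ) (Q : Measure Ω) : ℝ :=
  sInf {z : ℝ | ∃ y : ℝ, 0 < y ∧
    z = (1 / y) *
      ((∫ ω, (V (y * (Q.rnDeriv P ω).toReal) + y * (Q.rnDeriv P ω).toReal * ℰ ω) ∂P) - vℰ)}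

/-- Key integral identity: shifting the endowment by `B - q` shifts the dual value by
`y * (E_Q[B] - q)`. -/
lemma shift_integral {Ω : Type*} {m : MeasurableSpace Ω} (P : Measure Ω)
    [IsProbabilityMeasure P] (Q : Measure Ω) (hQP : Q ≪ P) [IsProbabilityMeasure Q]
    (V : ℝ → ℝ) (ℰ B : Ω → ℝ) (hB : Integrable B Q) (y q : ℝ)
    (hI : Integrable (fun ω =>
      V (y * (Q.rnDeriv P ω).toReal) + y * (Q.rnDeriv P ω).toReal * ℰ ω) P) :
    ∫ ω, (V (y * (Q.rnDeriv P ω).toReal) +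
        y * (Q.rnDeriv P ω).toReal * (ℰ ω + B ω - q)) ∂P
      = (∫ ω, (V (y * (Q.rnDeriv P ω).toReal) + y * (Q.rnDeriv P ω).toReal * ℰ ω) ∂P)
        + y * ((∫ ω, B ω ∂Q) - q) := by
  have hρ : Integrable (fun ω => (Q.rnDeriv P ω).toReal) P :=
    Measure.integrable_toReal_rnDeriv
  have hρB : Integrable (fun ω => (Q.rnDeriv P ω).toReal * B ω) P := by
    simpa [smul_eq_mul] using (integrable_rnDeriv_smul_iff (f := B) hQP).mpr hB
  have hIB : Integrable (fun ω => y * ((Q.rnDeriv P ω).toReal * B ω)) P := hρB.const_mul y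
  have hIq : Integrable (fun ω => (y * q) * (Q.rnDeriv P ω).toReal) P := hρ.const_mul _
  have heq : (fun ω => V (y * (Q.rnDeriv P ω).toReal) +
        y * (Q.rnDeriv P ω).toReal * (ℰ ω + B ω - q))
      = fun ω => ((V (y * (Q.rnDeriv P ω).toReal) + y * (Q.rnDeriv P ω).toReal * ℰ ω)
          + y * ((Q.rnDeriv P ω).toReal * B ω)) - (y * q) * (Q.rnDeriv P ω).toReal := by
    funext ω; ring
  have hsum : Integrable (fun ω => (V (y * (Q.rnDeriv P ω).toReal) +
      y * (Q.rnDeriv P ω).toReal * ℰ ω) + y * ((Q.rnDeriv P ω).toReal * B ω)) P := hI.add hIB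
  rw [heq, integral_sub hsum hIq, integral_add hI hIB, integral_const_mul,
    integral_const_mul]
  have h1 : ∫ ω, (Q.rnDeriv P ω).toReal * B ω ∂P = ∫ ω, B ω ∂Q := by
    simpa [smul_eq_mul] using integral_rnDeriv_smul (f := B) hQP
  have h2 : ∫ ω, (Q.rnDeriv P ω).toReal ∂P = 1 := by
    rw [Measure.integral_toReal_rnDeriv hQP]; simp
  rw [h1, h2]; ring

/-- Entropic penalty representation of the indifference price:
`p_ℰ(B) = inf_{Q ∈ M_V^a} (E_Q[B] + α(Q))` with `α(Q) ≥ 0`, where `v` is the common value of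
the primal and dual problems (`u_{ℰ'} = v_{ℰ'} = min` over the cone of `M_V^a`). -/
theorem indifference_price_entropic_penalty
    {Ω : Type*} {m : MeasurableSpace Ω} (P : Measure Ω) [IsProbabilityMeasure P]
    (V : ℝ → ℝ) (M : Set (Measure Ω)) (hM : M.Nonempty)
    (hMP : ∀ Q ∈ M, Q ≪ P ∧ IsProbabilityMeasure Q)
    (ℰ B : Ω → ℝ)
    (hBint : ∀ Q ∈ M, Integrable B Q)
    (hint : ∀ Q ∈ M, ∀ y : ℝ, 0 ≤ y →
      Integrable (fun ω =>
        V (y * (Q.rnDeriv P ω).toReal) + y * (Q.rnDeriv P ω).toReal * ℰ ω) P)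
    (v : (Ω → ℝ) → ℝ)
    (hdualℰ : IsGLB {r : ℝ | ∃ y : ℝ, 0 ≤ y ∧ ∃ Q ∈ M,
        r = ∫ ω, (V (y * (Q.rnDeriv P ω).toReal) + y * (Q.rnDeriv P ω).toReal * ℰ ω) ∂P}
      (v ℰ))
    (hdualq : ∀ q : ℝ, IsGLB {r : ℝ | ∃ y : ℝ, 0 ≤ y ∧ ∃ Q ∈ M,
        r = ∫ ω, (V (y * (Q.rnDeriv P ω).toReal) +
          y * (Q.rnDeriv P ω).toReal * (ℰ ω + B ω - q)) ∂P}
      (v (fun ω => ℰ ω + B ω - q)))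
    (hanti : StrictAnti (fun q : ℝ => v (fun ω => ℰ ω + B ω - q)))
    (hcont : Continuous (fun q : ℝ => v (fun ω => ℰ ω + B ω - q)))
    (p : ℝ) (hp : v (fun ω => ℰ ω + B ω - p) = v ℰ) :
    (∀ Q ∈ M, 0 ≤ entropicPenalty P V ℰ (v ℰ) Q) ∧
      p = sInf {r : ℝ | ∃ Q ∈ M,
        r = (∫ ω, B ω ∂Q) + entropicPenalty P V ℰ (v ℰ) Q} := by
  -- Notation
  set F : ℝ → Measure Ω → ℝ := fun y Q =>
    ∫ ω, (V (y * (Q.rnDeriv P ω).toReal) + y * (Q.rnDeriv P ω).toReal * ℰ ω) ∂P with hF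
  -- each F y Q, y ≥ 0, Q ∈ M, is ≥ v ℰ
  have hFge : ∀ Q ∈ M, ∀ y : ℝ, 0 ≤ y → v ℰ ≤ F y Q := fun Q hQ y hy =>
    hdualℰ.1 ⟨y, hy, Q, hQ, rfl⟩
  -- the set defining the penalty
  have hSQ : ∀ Q, {z : ℝ | ∃ y : ℝ, 0 < y ∧
      z = (1 / y) * (F y Q - v ℰ)}.Nonempty := fun Q =>
    ⟨(1/1) * (F 1 Q - v ℰ), 1, one_pos, rfl⟩
  have hSnn : ∀ Q ∈ M, ∀ z ∈ {z : ℝ | ∃ y : ℝ, 0 < y ∧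
      z = (1 / y) * (F y Q - v ℰ)}, (0:ℝ) ≤ z := by
    rintro Q hQ z ⟨y, hy, rfl⟩
    have := hFge Q hQ y hy.le
    exact mul_nonneg (by positivity) (by linarith)
  have hpen_nonneg : ∀ Q ∈ M, 0 ≤ entropicPenalty P V ℰ (v ℰ) Q := fun Q hQ =>
    le_csInf (hSQ Q) (hSnn Q hQ)
  have hbddS : ∀ Q ∈ M, BddBelow {z : ℝ | ∃ y : ℝ, 0 < y ∧
      z = (1 / y) * (F y Q - v ℰ)} := fun Q hQ => ⟨0, hSnn Q hQ⟩
  -- the shift identity, abbreviated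
  have hshift : ∀ Q ∈ M, ∀ y : ℝ, 0 ≤ y → ∀ q : ℝ,
      ∫ ω, (V (y * (Q.rnDeriv P ω).toReal) +
          y * (Q.rnDeriv P ω).toReal * (ℰ ω + B ω - q)) ∂P
        = F y Q + y * ((∫ ω, B ω ∂Q) - q) := by
    intro Q hQ y hy q
    obtain ⟨hQP, hQprob⟩ := hMP Q hQ
    exact shift_integral P Q hQP V ℰ B (hBint Q hQ) y q (hint Q hQ y hy)
  -- the target set A
  set A : Set ℝ := {r : ℝ | ∃ Q ∈ M,
    r = (∫ ω, B ω ∂Q) + entropicPenalty P V ℰ (v ℰ) Q} with hA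
  have hAne : A.Nonempty := by
    obtain ⟨Q, hQ⟩ := hM
    exact ⟨_, Q, hQ, rfl⟩
  -- key equivalence: v ℰ ≤ v(ℰ + B - q) ↔ q is a lower bound of A
  have hkey : ∀ q : ℝ, (v ℰ ≤ v (fun ω => ℰ ω + B ω - q)) ↔ q ∈ lowerBounds A := by
    intro q
    constructor
    · rintro h r ⟨Q, hQ, rfl⟩
      have hle : q - ∫ ω, B ω ∂Q ≤ entropicPenalty P V ℰ (v ℰ) Q := by
        refine le_csInf (hSQ Q) ?_
        rintro z ⟨y, hy, rfl⟩
        have h1 : v ℰ ≤ F y Q + y * ((∫ ω, B ω ∂Q) - q) := by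
          refine le_trans h ?_
          have := (hdualq q).1 ⟨y, hy.le, Q, hQ, rfl⟩
          rwa [hshift Q hQ y hy.le q] at this
        rw [show (∫ ω, (V (y * (Q.rnDeriv P ω).toReal) +
          y * (Q.rnDeriv P ω).toReal * ℰ ω) ∂P) = F y Q from rfl]
        have h2 : 0 ≤ (1 / y) * (F y Q + y * ((∫ ω, B ω ∂Q) - q) - v ℰ) :=
          mul_nonneg (by positivity) (by linarith)
        have h3 : (1 / y) * (F y Q + y * ((∫ ω, B ω ∂Q) - q) - v ℰ)
            = (1 / y) * (F y Q - v ℰ) - (q - ∫ ω, B ω ∂Q) := by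
          field_simp; ring
        linarith [h3 ▸ h2]
      linarith
    · intro h
      refine (hdualq q).2 ?_
      rintro r ⟨y, hy, Q, hQ, rfl⟩
      rw [hshift Q hQ y hy q]
      rcases eq_or_lt_of_le hy with hy0 | hy0
      · simp only [← hy0, zero_mul, add_zero]
        exact hFge Q hQ 0 le_rfl
      · -- q ≤ E_Q B + penalty ≤ E_Q B + (1/y)(F y Q - v ℰ)
        have hz : entropicPenalty P V ℰ (v ℰ) Q ≤ (1 / y) * (F y Q - v ℰ) :=
          csInf_le (hbddS Q hQ) ⟨y, hy0, rfl⟩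
        have hq : q ≤ (∫ ω, B ω ∂Q) + (1 / y) * (F y Q - v ℰ) :=
          le_trans (h ⟨Q, hQ, rfl⟩) (by linarith)
        have : (F y Q + y * ((∫ ω, B ω ∂Q) - q)) - v ℰ
            = y * (((∫ ω, B ω ∂Q) + (1 / y) * (F y Q - v ℰ)) - q) := by
          field_simp; ring
        nlinarith [mul_nonneg hy0.le (sub_nonneg.mpr hq)]
  -- p is a lower bound of A
  have hplb : p ∈ lowerBounds A := (hkey p).mp hp.ge
  have hAbdd : BddBelow A := ⟨p, hplb⟩
  refine ⟨hpen_nonneg, le_antisymm (le_csInf hAne hplb) ?_⟩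
  -- if sInf A > p, contradiction via strict antitonicity
  by_contra hlt
  push_neg at hlt
  have hlb : sInf A ∈ lowerBounds A := fun r hr => csInf_le hAbdd hr
  have := (hkey (sInf A)).mpr hlb
  have h2 := hanti hlt
  simp only at h2
  rw [hp] at h2
  exact absurd this (not_le.mpr h2)
end

section
/- Large-volume asymptotics: lim_{β→∞} p_ℰ(B,β) = inf_{Q ∈ M_V^a} E_Q[B]. In particular, if some Q ∈ M_V^a satisfied E_Q[B] < lim_{β→∞} p_ℰ(B,β) =: L, then u_ℰ = u_ℰ(βB - p_ℰ(βB)) ≤ E[V(dQ/dP) + (dQ/dP)ℰ] + β(E_Q[B] - p_ℰ(B,β)) → -∞ as β → ∞, a contradiction; combined with the lower bound p_ℰ(B,β) ≥ inf_{Q} E_Q[B] this gives the limit. -/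
open Set Filter MeasureTheory

/-- Large-volume asymptotics of the average indifference price:
`lim_{β → ∞} p_ℰ(B, β) = inf_{Q ∈ M_V^a} E_Q[B]`, where `p β` is the indifference price of
`β B` (defined by `u(ℰ + β B - p β) = u ℰ` with `u` given by the duality
`u_{ℰ'} = inf_{μ ∈ Cone(M_V^a)} E[V(dμ/dP) + (dμ/dP) ℰ']`), `p β / β` is non-increasing in
`β` and bounded below by `inf_{Q ∈ M_V^a} E_Q[B]`. -/
theorem average_indifference_price_large_volume_limit
    {Ω : Type*} {m : MeasurableSpace Ω} (P : Measure Ω) [IsProbabilityMeasure P]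
    (V : ℝ → ℝ) (M : Set (Measure Ω)) (hM : M.Nonempty)
    (hMP : ∀ Q ∈ M, Q ≪ P ∧ IsProbabilityMeasure Q)
    (hent : ∀ Q ∈ M, Integrable (fun ω => V ((Q.rnDeriv P ω).toReal)) P)
    (ℰ B : Ω → ℝ)
    (hℰint : ∀ Q ∈ M, Integrable ℰ Q) (hBint : ∀ Q ∈ M, Integrable B Q)
    (v : (Ω → ℝ) → ℝ)
    (hdual : ∀ e : Ω → ℝ,
      IsGLB {r : ℝ | ∃ y : ℝ, 0 ≤ y ∧ ∃ Q ∈ M,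
        r = ∫ ω, (V (y * (Q.rnDeriv P ω).toReal) + y * (Q.rnDeriv P ω).toReal * e ω) ∂P}
        (v e))
    (p : ℝ → ℝ)
    (hp : ∀ β : ℝ, 0 < β → v (fun ω => ℰ ω + β * B ω - p β) = v ℰ)
    (hmono : ∀ β₁ β₂ : ℝ, 0 < β₁ → β₁ ≤ β₂ → p β₂ / β₂ ≤ p β₁ / β₁)
    (hbddE : BddBelow {r : ℝ | ∃ Q ∈ M, r = ∫ ω, B ω ∂Q})
    (hlb : ∀ β : ℝ, 0 < β → sInf {r : ℝ | ∃ Q ∈ M, r = ∫ ω, B ω ∂Q} ≤ p β / β) :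
    Tendsto (fun β : ℝ => p β / β) atTop
      (nhds (sInf {r : ℝ | ∃ Q ∈ M, r = ∫ ω, B ω ∂Q})) := by
  set S : Set ℝ := {r : ℝ | ∃ Q ∈ M, r = ∫ ω, B ω ∂Q} with hS
  obtain ⟨Q₀, hQ₀⟩ := hM
  have hSne : S.Nonempty := ⟨∫ ω, B ω ∂Q₀, Q₀, hQ₀, rfl⟩
  set s := sInf S with hs
  -- key inequality: for every Q ∈ M and β > 0,
  -- v ℰ ≤ ∫ V(rn) dP + ∫ ℰ dQ + β * ∫ B dQ - p β
  have key : ∀ Q ∈ M, ∀ β : ℝ, 0 < β →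
      v ℰ ≤ (∫ ω, V ((Q.rnDeriv P ω).toReal) ∂P) + (∫ ω, ℰ ω ∂Q)
        + β * (∫ ω, B ω ∂Q) - p β := by
    intro Q hQ β hβ
    obtain ⟨hQP, hQprob⟩ := hMP Q hQ
    haveI := hQprob
    set e : Ω → ℝ := fun ω => ℰ ω + β * B ω - p β with he
    have hfint : Integrable (fun ω => ℰ ω + β * B ω) Q :=
      (hℰint Q hQ).add ((hBint Q hQ).const_mul β)
    have he_int : Integrable e Q := hfint.sub (integrable_const _)
    have hint2 : Integrable (fun ω => (Q.rnDeriv P ω).toReal * e ω) P := by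
      have := (MeasureTheory.integrable_rnDeriv_smul_iff (f := e) hQP).mpr he_int
      simpa [smul_eq_mul] using this
    have hmem : (∫ ω, (V (1 * (Q.rnDeriv P ω).toReal)
        + 1 * (Q.rnDeriv P ω).toReal * e ω) ∂P) ∈
        {r : ℝ | ∃ y : ℝ, 0 ≤ y ∧ ∃ Q ∈ M,
          r = ∫ ω, (V (y * (Q.rnDeriv P ω).toReal) + y * (Q.rnDeriv P ω).toReal * e ω) ∂P} :=
      ⟨1, zero_le_one, Q, hQ, rfl⟩
    have hle : v e ≤ ∫ ω, (V (1 * (Q.rnDeriv P ω).toReal)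
        + 1 * (Q.rnDeriv P ω).toReal * e ω) ∂P := (hdual e).1 hmem
    have hsplit : (∫ ω, (V (1 * (Q.rnDeriv P ω).toReal)
        + 1 * (Q.rnDeriv P ω).toReal * e ω) ∂P)
        = (∫ ω, V ((Q.rnDeriv P ω).toReal) ∂P) + ∫ ω, e ω ∂Q := by
      simp only [one_mul]
      rw [integral_add (hent Q hQ) hint2]
      congr 1
      have := MeasureTheory.integral_rnDeriv_smul (f := e) hQP
      simpa [smul_eq_mul] using this
    have heq : (∫ ω, e ω ∂Q)
        = (∫ ω, ℰ ω ∂Q) + β * (∫ ω, B ω ∂Q) - p β := by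
      simp only [he]
      rw [integral_sub hfint (integrable_const _),
        integral_add (hℰint Q hQ) ((hBint Q hQ).const_mul β)]
      simp [integral_const_mul]
    calc v ℰ = v e := (hp β hβ).symm
      _ ≤ _ := hle
      _ = _ := by rw [hsplit, heq]; ring
  -- for every ε > 0, there is β > 0 with p β / β < s + ε
  have hkey2 : ∀ ε : ℝ, 0 < ε → ∃ β : ℝ, 0 < β ∧ p β / β < s + ε := by
    intro ε hε
    by_contra hcon
    push_neg at hcon
    obtain ⟨r, ⟨Q, hQ, hr⟩, hrlt⟩ := exists_lt_of_csInf_lt hSne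
      (lt_add_of_pos_right s (half_pos hε))
    have hrlt' : r < s + ε := lt_of_lt_of_le hrlt (by linarith)
    set C : ℝ := (∫ ω, V ((Q.rnDeriv P ω).toReal) ∂P) + (∫ ω, ℰ ω ∂Q) with hC
    have hδpos : 0 < s + ε - r := by linarith
    obtain ⟨β, hβ1, hβ2⟩ : ∃ β : ℝ, 0 < β ∧ (C - v ℰ + 1) / (s + ε - r) < β :=
      ⟨max 1 ((C - v ℰ + 1) / (s + ε - r) + 1),
        lt_of_lt_of_le one_pos (le_max_left _ _),
        lt_of_lt_of_le (lt_add_one _) (le_max_right _ _)⟩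
    have h1 := key Q hQ β hβ1
    have h2 : s + ε ≤ p β / β := hcon β hβ1
    have hpβ : (s + ε) * β ≤ p β := (le_div_iff₀ hβ1).mp h2
    have h1' : v ℰ ≤ C + β * r - p β := by rw [hr]; linarith [h1]
    have hβδ : C - v ℰ + 1 < β * (s + ε - r) := (div_lt_iff₀ hδpos).mp hβ2
    have hexp : β * (s + ε - r) = (s + ε) * β - β * r := by ring
    linarith
  -- conclude via metric convergence
  rw [Metric.tendsto_atTop]
  intro ε hε
  obtain ⟨β₀, hβ₀, hβ₀lt⟩ := hkey2 ε hε
  refine ⟨max β₀ 1, fun β hβ => ?_⟩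
  have hβpos : 0 < β := lt_of_lt_of_le one_pos (le_trans (le_max_right _ _) hβ)
  have h1 : s ≤ p β / β := hlb β hβpos
  have h2 : p β / β ≤ p β₀ / β₀ := hmono β₀ β hβ₀ (le_trans (le_max_left _ _) hβ)
  rw [Real.dist_eq, abs_lt]
  constructor <;> linarith
end
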